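/- Let 2 ≤ k < q, r = q − k, and u ∈ 𝔽_q^q. Then u is a deep hole of TRS_k(𝔽_q, θ) if and only if for every choice of r − 1 pairwise distinct elements β_1, …, β_{r-1} ∈ 𝔽_q, the r vectors c_{r,θ}(β_1), …, c_{r,θ}(β_{r-1}), H·u^T in 𝔽_q^r are linearly independent over 𝔽_q. -/

import Mathlib

/-!
`TRS_k(𝔽_q, θ)` is the kernel of `H`: power sums over `𝔽_q` give `∑ₐ aⁱ p(a) = -p_{q-1-i}` for
`deg p < q`, so the syndrome of the evaluation vector of `p` reads off exactly the coefficients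
that the twist constrains. Hence `d(u, C)` is the least weight of an `e` with `H eᵀ = H uᵀ`, i.e.
the least number of columns of `H` whose span contains `H uᵀ`; this is at most `r`. Any `r - 1`
columns are linearly independent, since their first `r - 1` coordinates form a Vandermonde
matrix, so `d(u, C) = r` exactly when `H uᵀ` is outside the span of every `r - 1` columns, which
is the stated linear independence. The word `(α_j ^ k)_j` attains this, so `ρ = r`.
-/

open Polynomial Finset

/-- The set `S_{k,θ}` of twisted polynomials
`Σ_{i=0}^{k-2} f_i x^i + f_{k-1}(x^{k-1} + θ x^k)`. -/
def Sset (F : Type*) [Field F] (k : ℕ) (θ : F) : Set (Polynomial F) :=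
  {p | ∃ f : ℕ → F, p = (∑ i ∈ Finset.range (k - 1), Polynomial.C (f i) * Polynomial.X ^ i)
        + Polynomial.C (f (k - 1)) * (Polynomial.X ^ (k - 1) + Polynomial.C θ * Polynomial.X ^ k)}

/-- The twisted Reed–Solomon code `TRS_k(A, θ)` for the evaluation sequence `α`. -/
def TRS {F : Type*} [Field F] {n : ℕ} (α : Fin n → F) (k : ℕ) (θ : F) : Set (Fin n → F) :=
  {v | ∃ p ∈ Sset F k θ, v = fun j => p.eval (α j)}

/-- The (Hamming) error distance `d(u, C)` from a word `u` to a code `C`. -/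
noncomputable def distTo {F : Type*} [DecidableEq F] {n : ℕ} (u : Fin n → F)
    (C : Set (Fin n → F)) : ℕ :=
  sInf {d | ∃ c ∈ C, hammingDist u c = d}

/-- The covering radius `ρ(C) = max_u d(u, C)` of a code `C`. -/
noncomputable def covRad {F : Type*} [DecidableEq F] {n : ℕ} (C : Set (Fin n → F)) : ℕ :=
  sSup {d | ∃ u, distTo u C = d}

/-- `u` is a deep hole of `C` if `d(u, C) = ρ(C)`. -/
def IsDeepHole {F : Type*} [DecidableEq F] {n : ℕ} (C : Set (Fin n → F)) (u : Fin n → F) :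
    Prop :=
  distTo u C = covRad C

/-- The column vector `c_{r,θ}(a) = (1, a, …, a^{r-2}, a^{r-1} - θ a^r)ᵀ ∈ 𝔽_q^r`. -/
def crv (F : Type*) [Field F] (r : ℕ) (θ a : F) : Fin r → F :=
  fun i => if (i : ℕ) = r - 1 then a ^ (r - 1) - θ * a ^ r else a ^ (i : ℕ)

/-- The parity-check matrix `H` whose `j`-th column is `c_{r,θ}(α_j)`. -/
def Hmat {F : Type*} [Field F] {n : ℕ} (r : ℕ) (θ : F) (α : Fin n → F) :
    Matrix (Fin r) (Fin n) F :=
  Matrix.of fun i j => crv F r θ (α j) i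

namespace FiniteField

variable {K : Type*} [Field K] [Fintype K]

lemma sum_pow_eq_sum_units [DecidableEq K] {n : ℕ} (hn : n ≠ 0) :
    ∑ x : K, x ^ n = ∑ x : Kˣ, (x : K) ^ n := by
  rw [← sum_filter_of_ne (p := (· ≠ 0)) fun x _ hx => ?_,
    sum_subtype (p := (· ≠ 0)) _ fun _ => by simp]
  · exact Fintype.sum_equiv unitsEquivNeZero.symm _ _ fun _ => rfl
  · rintro rfl
    exact hx (zero_pow hn)

lemma sum_pow_of_lt_two_mul {n : ℕ} (hn : n < 2 * (Fintype.card K - 1)) :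
    ∑ x : K, x ^ n = if n = Fintype.card K - 1 then -1 else 0 := by
  classical
  have hK : 1 < Fintype.card K := Fintype.one_lt_card
  rcases Nat.eq_zero_or_pos n with rfl | hn₀
  · rw [if_neg (by omega)]
    exact sum_pow_lt_card_sub_one K 0 (by omega)
  rw [sum_pow_eq_sum_units hn₀.ne', sum_pow_units]
  exact if_congr ⟨fun h => Nat.eq_of_dvd_of_lt_two_mul hn₀.ne' h hn, fun h => h ▸ dvd_rfl⟩ rfl rfl

/-- Only the coefficient completing `x ^ i` to `x ^ (q - 1)` survives the summation. -/
lemma sum_pow_mul_eval {p : K[X]} (hp : p.natDegree < Fintype.card K) {i : ℕ}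
    (hi : i < Fintype.card K - 1) :
    ∑ x : K, x ^ i * p.eval x = -p.coeff (Fintype.card K - 1 - i) := by
  calc ∑ x : K, x ^ i * p.eval x
      = ∑ m ∈ range (Fintype.card K), p.coeff m * ∑ x : K, x ^ (i + m) := by
        simp_rw [eval_eq_sum_range' hp, mul_sum, pow_add]
        rw [sum_comm]
        exact sum_congr rfl fun m _ => sum_congr rfl fun x _ => by ring
    _ = ∑ m ∈ range (Fintype.card K), if m = Fintype.card K - 1 - i then -p.coeff m else 0 := by
        refine sum_congr rfl fun m hm => ?_
        rw [mem_range] at hm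
        rw [sum_pow_of_lt_two_mul (by omega)]
        simp only [show i + m = Fintype.card K - 1 ↔ m = Fintype.card K - 1 - i by omega]
        split_ifs <;> ring
    _ = -p.coeff (Fintype.card K - 1 - i) := by
        rw [sum_ite_eq', if_pos (mem_range.2 (by omega))]

end FiniteField

section Decoding

variable {K M ι : Type*} [Field K] [DecidableEq K] [AddCommGroup M] [Module K M] [Fintype ι]
  {v : ι → M} {s : M}

lemma exists_hammingNorm_le_iff_exists_finset {n : ℕ} :
    (∃ e : ι → K, Fintype.linearCombination K v e = s ∧ hammingNorm e ≤ n) ↔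
      ∃ J : Finset ι, #J ≤ n ∧ s ∈ Submodule.span K (v '' J) := by
  classical
  simp_rw [Submodule.mem_span_image_finset_iff_exists_fun']
  constructor
  · rintro ⟨e, rfl, he⟩
    refine ⟨univ.filter (e · ≠ 0), he, e, ?_⟩
    rw [Fintype.linearCombination_apply]
    exact sum_filter_of_ne fun j _ h => left_ne_zero_of_smul h
  · rintro ⟨J, hJ, c, rfl⟩
    refine ⟨fun j => if j ∈ J then c j else 0, ?_, le_trans (card_le_card fun j => ?_) hJ⟩
    · simp [Fintype.linearCombination_apply, ite_smul, sum_ite_mem]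
    · simp only [mem_filter, mem_univ, true_and]
      exact fun h => by_contra fun hj => h (if_neg hj)

lemma exists_hammingNorm_le_iff_exists_injective {n : ℕ} (hn : n ≤ Fintype.card ι) :
    (∃ e : ι → K, Fintype.linearCombination K v e = s ∧ hammingNorm e ≤ n) ↔
      ∃ a : Fin n → ι, a.Injective ∧ s ∈ Submodule.span K (Set.range (v ∘ a)) := by
  rw [exists_hammingNorm_le_iff_exists_finset]
  constructor
  · rintro ⟨J, hJ, hs⟩
    obtain ⟨J', hJJ', hJ'⟩ := exists_superset_card_eq hJ hn
    let a : Fin n → ι := fun i => (J'.equivFinOfCardEq hJ').symm i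
    have ha : Set.range a = J' := by
      ext j
      exact ⟨by rintro ⟨i, rfl⟩; exact coe_mem _,
        fun hj => ⟨J'.equivFinOfCardEq hJ' ⟨j, hj⟩, by simp [a]⟩⟩
    refine ⟨a, fun i i' h => (J'.equivFinOfCardEq hJ').symm.injective (Subtype.ext h), ?_⟩
    rw [Set.range_comp, ha]
    exact Submodule.span_mono (Set.image_mono hJJ') hs
  · rintro ⟨a, ha, hs⟩
    refine ⟨univ.map ⟨a, ha⟩, by simp, ?_⟩
    rwa [coe_map, coe_univ, Set.image_univ, Function.Embedding.coeFn_mk, ← Set.range_comp]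

lemma exists_hammingNorm_le_finrank [FiniteDimensional K M]
    (hs : s ∈ Submodule.span K (Set.range v)) :
    ∃ e : ι → K, Fintype.linearCombination K v e = s ∧ hammingNorm e ≤ Module.finrank K M := by
  classical
  obtain ⟨b, -, -, hspan, hli⟩ :=
    exists_linearIndepOn_extension (linearIndepOn_empty K v) (Set.empty_subset Set.univ)
  refine exists_hammingNorm_le_iff_exists_finset.2 ⟨b.toFinset, ?_, ?_⟩
  · rw [Set.toFinset_card]
    exact hli.fintype_card_le_finrank
  · rw [Set.coe_toFinset]
    rw [Set.image_univ] at hspan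
    exact Submodule.span_le.2 hspan hs

variable {n : ℕ} {v : Fin n → M} {C : Set (Fin n → K)}

lemma distTo_le_iff (hC : ∀ c, c ∈ C ↔ Fintype.linearCombination K v c = 0) {u : Fin n → K}
    {d : ℕ} :
    distTo u C ≤ d ↔ ∃ e, Fintype.linearCombination K v e = Fintype.linearCombination K v u ∧
      hammingNorm e ≤ d := by
  have hne : {m | ∃ c ∈ C, hammingDist u c = m}.Nonempty := ⟨_, 0, (hC 0).2 (map_zero _), rfl⟩
  constructor
  · intro h
    obtain ⟨c, hc, hcd⟩ := Nat.sInf_mem hne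
    refine ⟨u - c, by rw [map_sub, (hC c).1 hc, sub_zero], ?_⟩
    rwa [← neg_add_eq_sub, ← hammingDist_eq_hammingNorm, hammingDist_comm, hcd]
  · rintro ⟨e, he, hed⟩
    refine le_trans (Nat.sInf_le ⟨u - e, (hC _).2 (by rw [map_sub, he, sub_self]), ?_⟩) hed
    rw [hammingDist_comm, hammingDist_eq_hammingNorm, neg_sub, sub_add_cancel]

lemma distTo_le_finrank [FiniteDimensional K M]
    (hC : ∀ c, c ∈ C ↔ Fintype.linearCombination K v c = 0) (u : Fin n → K) :
    distTo u C ≤ Module.finrank K M :=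
  (distTo_le_iff hC).2 <|
    exists_hammingNorm_le_finrank ((Submodule.mem_span_range_iff_exists_fun K).2 ⟨u, rfl⟩)

end Decoding

lemma covRad_eq_of_forall_distTo_le {F : Type*} [DecidableEq F] {n d : ℕ} {C : Set (Fin n → F)}
    (hle : ∀ u, distTo u C ≤ d) {u₀ : Fin n → F} (hu₀ : distTo u₀ C = d) : covRad C = d := by
  have hbdd : BddAbove {d | ∃ u, distTo u C = d} := ⟨d, by rintro _ ⟨u, rfl⟩; exact hle u⟩
  exact le_antisymm (csSup_le ⟨d, u₀, hu₀⟩ (by rintro _ ⟨u, rfl⟩; exact hle u))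
    (le_csSup hbdd ⟨u₀, hu₀⟩)

lemma linearIndependent_sum_elim_unit_iff {K V ι : Type*} [Field K] [AddCommGroup V] [Module K V]
    {v : ι → V} (hv : LinearIndependent K v) {x : V} :
    LinearIndependent K (Sum.elim v fun _ : Unit => x) ↔ x ∉ Submodule.span K (Set.range v) := by
  rw [linearIndependent_sum, Sum.elim_comp_inl, Sum.elim_comp_inr,
    linearIndependent_unique_iff (v := fun _ : Unit => x), Set.range_const,
    Submodule.disjoint_span_singleton]
  exact ⟨fun h hx => h.2.1 (h.2.2 hx), fun h => ⟨hv, fun h0 => h (h0 ▸ zero_mem _), (h · |>.elim)⟩⟩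

section TwistedReedSolomon

variable {F : Type*} [Field F]

lemma coeff_twisted (k : ℕ) (θ : F) (f : ℕ → F) (m : ℕ) :
    ((∑ i ∈ range (k - 1), C (f i) * X ^ i) + C (f (k - 1)) * (X ^ (k - 1) + C θ * X ^ k)).coeff m
      = (if m < k - 1 then f m else 0) + (if m = k - 1 then f (k - 1) else 0)
        + (if m = k then f (k - 1) * θ else 0) := by
  simp [coeff_X_pow, mul_add, add_assoc]

lemma mem_Sset_iff {k : ℕ} (hk : 1 ≤ k) {θ : F} {p : F[X]} :
    p ∈ Sset F k θ ↔ p.natDegree ≤ k ∧ p.coeff k = θ * p.coeff (k - 1) := by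
  constructor
  · rintro ⟨f, rfl⟩
    refine ⟨natDegree_le_iff_coeff_eq_zero.2 fun m hm => ?_, ?_⟩
    · rw [coeff_twisted, if_neg (by omega), if_neg (by omega), if_neg (by omega)]
      simp
    · rw [coeff_twisted, coeff_twisted, if_neg (by omega), if_neg (by omega), if_pos rfl,
        if_neg (by omega), if_pos rfl, if_neg (by omega)]
      ring
  · rintro ⟨hdeg, hcoeff⟩
    refine ⟨p.coeff, ext fun m => ?_⟩
    rw [coeff_twisted]
    rcases lt_trichotomy m (k - 1) with hm | rfl | hm
    · simp [hm, show m ≠ k - 1 by omega, show m ≠ k by omega]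
    · simp [show k - 1 ≠ k by omega]
    · rcases (show k = m ∨ k < m by omega) with rfl | hm'
      · simp [hcoeff, mul_comm, show ¬ k < k - 1 by omega, show k ≠ k - 1 by omega]
      · simp [show ¬ m < k - 1 by omega, show m ≠ k - 1 by omega, show m ≠ k by omega,
          coeff_eq_zero_of_natDegree_lt (hdeg.trans_lt hm')]

lemma exists_natDegree_lt_eval_eq {n : ℕ} (hn : 0 < n) {α : Fin n → F}
    (hα : α.Injective) (v : Fin n → F) :
    ∃ p : F[X], p.natDegree < n ∧ (fun j => p.eval (α j)) = v := by
  have hdeg : (Lagrange.interpolate univ α v).degree < n := by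
    simpa using Lagrange.degree_interpolate_lt (s := univ) v hα.injOn
  refine ⟨_, ?_, funext fun j => Lagrange.eval_interpolate_at_node v hα.injOn (mem_univ j)⟩
  by_cases hp : Lagrange.interpolate univ α v = 0
  · simpa [hp]
  · rwa [natDegree_lt_iff_degree_lt hp]

lemma Hmat_mulVec_eq_linearCombination {n r : ℕ} (θ : F) (α e : Fin n → F) :
    (Hmat r θ α).mulVec e = Fintype.linearCombination F (fun j => crv F r θ (α j)) e := by
  ext i
  simp [Matrix.mulVec, dotProduct, Fintype.linearCombination_apply, Hmat, mul_comm]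

lemma eq_zero_of_sum_smul_crv_apply_eq_zero {r : ℕ} (θ : F) {β : Fin (r - 1) → F}
    (hβ : β.Injective) {g : Fin (r - 1) → F}
    (h : ∀ i : Fin r, (i : ℕ) < r - 1 → (∑ t, g t • crv F r θ (β t)) i = 0) : g = 0 :=
  Matrix.eq_zero_of_forall_pow_sum_mul_pow_eq_zero hβ fun i => by
    simpa [crv, show (i : ℕ) ≠ r - 1 from i.2.ne] using h ⟨i, by omega⟩ i.2

lemma linearIndependent_crv {r : ℕ} (θ : F) {β : Fin (r - 1) → F} (hβ : β.Injective) :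
    LinearIndependent F fun t => crv F r θ (β t) :=
  Fintype.linearIndependent_iff.2 fun g hg =>
    congrFun (eq_zero_of_sum_smul_crv_apply_eq_zero θ hβ fun i _ => by rw [hg]; rfl)

lemma notMem_span_crv {r : ℕ} (θ : F) {β : Fin (r - 1) → F} (hβ : β.Injective)
    {s : Fin r → F} (hs₀ : s ≠ 0) (hs : ∀ i : Fin r, (i : ℕ) < r - 1 → s i = 0) :
    s ∉ Submodule.span F (Set.range fun t => crv F r θ (β t)) := by
  intro hmem
  obtain ⟨g, rfl⟩ := (Submodule.mem_span_range_iff_exists_fun F).1 hmem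
  rw [eq_zero_of_sum_smul_crv_apply_eq_zero θ hβ hs] at hs₀
  simp at hs₀

variable [Fintype F]

lemma Hmat_mulVec_eval {q k : ℕ} (hq : q = Fintype.card F) (hk : 2 ≤ k) (hkq : k < q) (θ : F)
    {α : Fin q → F} (hα : α.Bijective) {p : F[X]} (hp : p.natDegree < q) (i : Fin (q - k)) :
    (Hmat (q - k) θ α).mulVec (fun j => p.eval (α j)) i =
      if (i : ℕ) = q - k - 1 then θ * p.coeff (k - 1) - p.coeff k
      else -p.coeff (q - 1 - i) := by
  subst hq
  have hi := i.2
  simp only [Matrix.mulVec, dotProduct, Hmat, Matrix.of_apply]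
  rw [hα.sum_comp fun a => crv F _ θ a i * p.eval a]
  split_ifs with hlast
  · simp only [crv, hlast, if_true, sub_mul, sum_sub_distrib, mul_assoc, ← mul_sum]
    rw [FiniteField.sum_pow_mul_eval hp (by omega), FiniteField.sum_pow_mul_eval hp (by omega),
      show Fintype.card F - 1 - (Fintype.card F - k - 1) = k by omega,
      show Fintype.card F - 1 - (Fintype.card F - k) = k - 1 by omega]
    ring
  · simp only [crv, hlast, if_false]
    exact FiniteField.sum_pow_mul_eval hp (by omega)

lemma mem_TRS_iff {q k : ℕ} (hq : q = Fintype.card F) (hk : 2 ≤ k) (hkq : k < q) (θ : F)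
    {α : Fin q → F} (hα : α.Bijective) (v : Fin q → F) :
    v ∈ TRS α k θ ↔ Fintype.linearCombination F (fun j => crv F (q - k) θ (α j)) v = 0 := by
  rw [← Hmat_mulVec_eq_linearCombination]
  constructor
  · rintro ⟨p, hp, rfl⟩
    obtain ⟨hdeg, hcoeff⟩ := (mem_Sset_iff (by omega)).1 hp
    ext i
    rw [Hmat_mulVec_eval hq hk hkq θ hα (by omega), Pi.zero_apply]
    split_ifs with hi
    · rw [hcoeff, sub_self]
    · rw [coeff_eq_zero_of_natDegree_lt (by omega), neg_zero]
  · intro hv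
    obtain ⟨p, hp, rfl⟩ := exists_natDegree_lt_eval_eq (by omega) hα.1 v
    have hsyn (i : Fin (q - k)) := congrFun hv i
    simp only [Hmat_mulVec_eval hq hk hkq θ hα hp, Pi.zero_apply] at hsyn
    refine ⟨p, (mem_Sset_iff (by omega)).2
      ⟨natDegree_le_iff_coeff_eq_zero.2 fun m hm => ?_, ?_⟩, rfl⟩
    · by_cases hmq : m < q
      · have := hsyn ⟨q - 1 - m, by omega⟩
        rwa [if_neg (by simp only; omega), Nat.sub_sub_self (by omega), neg_eq_zero] at this
      · exact coeff_eq_zero_of_natDegree_lt (by omega)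
    · have := hsyn ⟨q - k - 1, by omega⟩
      rw [if_pos rfl] at this
      linear_combination -this

variable [DecidableEq F]

lemma distTo_TRS_le {q k : ℕ} (hq : q = Fintype.card F) (hk : 2 ≤ k) (hkq : k < q) (θ : F)
    {α : Fin q → F} (hα : α.Bijective) (u : Fin q → F) :
    distTo u (TRS α k θ) ≤ q - k :=
  (distTo_le_finrank (mem_TRS_iff hq hk hkq θ hα) u).trans_eq (Module.finrank_fin_fun F)

lemma distTo_TRS_eq_iff {q k : ℕ} (hq : q = Fintype.card F) (hk : 2 ≤ k) (hkq : k < q) (θ : F)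
    {α : Fin q → F} (hα : α.Bijective) (u : Fin q → F) :
    distTo u (TRS α k θ) = q - k ↔ ∀ β : Fin (q - k - 1) → F, β.Injective →
      (Hmat (q - k) θ α).mulVec u ∉
        Submodule.span F (Set.range fun i => crv F (q - k) θ (β i)) := by
  have hle := distTo_TRS_le hq hk hkq θ hα u
  rw [show distTo u (TRS α k θ) = q - k ↔ ¬ distTo u (TRS α k θ) ≤ q - k - 1 by omega,
    distTo_le_iff (mem_TRS_iff hq hk hkq θ hα),
    exists_hammingNorm_le_iff_exists_injective (by simp; omega), Hmat_mulVec_eq_linearCombination]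
  push Not
  let σ := Equiv.ofBijective α hα
  refine ⟨fun h β hβ => ?_, fun h a ha => h (α ∘ a) (hα.1.comp ha)⟩
  simpa [Function.comp_def, σ, Equiv.ofBijective_apply_symm_apply] using
    h (σ.symm ∘ β) (σ.symm.injective.comp hβ)

lemma covRad_TRS {q k : ℕ} (hq : q = Fintype.card F) (hk : 2 ≤ k) (hkq : k < q) (θ : F)
    {α : Fin q → F} (hα : α.Bijective) :
    covRad (TRS α k θ) = q - k := by
  refine covRad_eq_of_forall_distTo_le (distTo_TRS_le hq hk hkq θ hα)
    (u₀ := fun j => (X ^ k : F[X]).eval (α j)) ?_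
  have hsyn := Hmat_mulVec_eval hq hk hkq θ hα (p := X ^ k) (by rw [natDegree_X_pow]; omega)
  rw [distTo_TRS_eq_iff hq hk hkq θ hα]
  refine fun β hβ => notMem_span_crv θ hβ (fun h₀ => ?_) fun i hi => ?_
  · have := congrFun h₀ ⟨q - k - 1, by omega⟩
    rw [hsyn, if_pos rfl] at this
    simp [coeff_X_pow, show k - 1 ≠ k by omega] at this
  · rw [hsyn, if_neg hi.ne, coeff_X_pow, if_neg (by omega), neg_zero]

end TwistedReedSolomon

theorem isDeepHole_iff_linearIndependent_general {F : Type*} [Field F] [Fintype F] [DecidableEq F]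
    (q : ℕ) (hq : q = Fintype.card F) (k : ℕ) (hk2 : 2 ≤ k) (hkq : k < q)
    (θ : F) (α : Fin q → F) (hα : Function.Bijective α) (u : Fin q → F) :
    IsDeepHole (TRS α k θ) u ↔
      ∀ β : Fin (q - k - 1) → F, Function.Injective β →
        LinearIndependent F
          (Sum.elim (fun i : Fin (q - k - 1) => crv F (q - k) θ (β i))
            (fun _ : Unit => (Hmat (q - k) θ α).mulVec u)) := by
  rw [IsDeepHole, covRad_TRS hq hk2 hkq θ hα, distTo_TRS_eq_iff hq hk2 hkq θ hα]
  exact forall₂_congr fun β hβ =>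
    (linearIndependent_sum_elim_unit_iff (linearIndependent_crv θ hβ)).symm

/-- For `2 ≤ k < q` and `r = q - k`, `u ∈ 𝔽_q^q` is a deep hole of
`TRS_k(𝔽_q, θ)` iff for all pairwise distinct `β_1, …, β_{r-1} ∈ 𝔽_q`, the `r` vectors
`c_{r,θ}(β_1), …, c_{r,θ}(β_{r-1}), H·uᵀ` are linearly independent over `𝔽_q`. -/
theorem isDeepHole_iff_linearIndependent {F : Type*} [Field F] [Fintype F] [DecidableEq F]
    (q : ℕ) (hq : q = Fintype.card F) (k : ℕ) (hk2 : 2 ≤ k) (hkq : k < q)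
    (θ : F) (hθ : θ ≠ 0) (α : Fin q → F) (hα : Function.Bijective α) (u : Fin q → F) :
    IsDeepHole (TRS α k θ) u ↔
      ∀ β : Fin (q - k - 1) → F, Function.Injective β →
        LinearIndependent F
          (Sum.elim (fun i : Fin (q - k - 1) => crv F (q - k) θ (β i))
            (fun _ : Unit => (Hmat (q - k) θ α).mulVec u)) :=
  isDeepHole_iff_linearIndependent_general q hq k hk2 hkq θ α hα u
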